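/- arXiv:2303.05731 — 2 statements merged into one kernel-verified Lean document; each statement's English description precedes it below -/
import Mathlib

section
/- Let x_i (1 ≤ i ≤ M) and y_j (1 ≤ j ≤ N) be real variables with absolute values bounded by a constant R, let a_i, b_j be real constants with a₁ ≠ 0, b₁ ≠ 0, and define f_{ij} = x_i y_j − a_i b_j. Then on the region where the right-hand side is small enough (equivalently, in a neighborhood of the zero set of the right-hand side), there exist positive constants c₁, c₂ such that c₁ (Σ_{i=2}^M f_{i1}² + Σ_{j=2}^N f_{1j}² + f_{11}²) ≤ Σ_{i=1}^M Σ_{j=1}^N f_{ij}² ≤ c₂ (Σ_{i=2}^M f_{i1}² + Σ_{j=2}^N f_{1j}² + f_{11}²). -/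
/-- Pointwise key bound: the identity
`a0*b0*(xi*yj - ai*bj) = (xi*y0 - ai*b0)*(x0*yj) + (ai*b0)*(x0*yj - a0*bj) - (xi*yj)*(x0*y0 - a0*b0)`
together with the bounds gives a bound on each entry. -/
lemma rank_one_key (a0 b0 ai bj x0 y0 xi yj R S A : ℝ)
    (hx0 : |x0| ≤ R) (hxi : |xi| ≤ R) (hy0 : |y0| ≤ R) (hyj : |yj| ≤ R)
    (hA : (ai * b0) ^ 2 ≤ A)
    (hS1 : (xi * y0 - ai * b0) ^ 2 ≤ S)
    (hS2 : (x0 * yj - a0 * bj) ^ 2 ≤ S)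
    (hS3 : (x0 * y0 - a0 * b0) ^ 2 ≤ S)
    (hS0 : 0 ≤ S) :
    (a0 * b0) ^ 2 * (xi * yj - ai * bj) ^ 2 ≤ 9 * (R ^ 4 + A) * S := by
  set u := xi * y0 - ai * b0 with hu
  set v := x0 * yj - a0 * bj with hv
  set w := x0 * y0 - a0 * b0 with hw
  have hA0 : 0 ≤ A := le_trans (sq_nonneg _) hA
  have hx0sq : x0 ^ 2 ≤ R ^ 2 := by
    have := pow_le_pow_left₀ (abs_nonneg x0) hx0 2
    rwa [sq_abs] at this
  have hxisq : xi ^ 2 ≤ R ^ 2 := by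
    have := pow_le_pow_left₀ (abs_nonneg xi) hxi 2
    rwa [sq_abs] at this
  have hyjsq : yj ^ 2 ≤ R ^ 2 := by
    have := pow_le_pow_left₀ (abs_nonneg yj) hyj 2
    rwa [sq_abs] at this
  have hR2 : 0 ≤ R ^ 2 := le_trans (sq_nonneg x0) hx0sq
  have hc1 : (x0 * yj) ^ 2 ≤ R ^ 4 := by
    calc (x0 * yj) ^ 2 = x0 ^ 2 * yj ^ 2 := by ring
      _ ≤ R ^ 2 * R ^ 2 := mul_le_mul hx0sq hyjsq (sq_nonneg yj) hR2
      _ = R ^ 4 := by ring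
  have hc3 : (xi * yj) ^ 2 ≤ R ^ 4 := by
    calc (xi * yj) ^ 2 = xi ^ 2 * yj ^ 2 := by ring
      _ ≤ R ^ 2 * R ^ 2 := mul_le_mul hxisq hyjsq (sq_nonneg yj) hR2
      _ = R ^ 4 := by ring
  have t1 : (u * (x0 * yj)) ^ 2 ≤ R ^ 4 * S := by
    calc (u * (x0 * yj)) ^ 2 = u ^ 2 * (x0 * yj) ^ 2 := by ring
      _ ≤ S * R ^ 4 := mul_le_mul hS1 hc1 (sq_nonneg _) hS0
      _ = R ^ 4 * S := by ring
  have t2 : ((ai * b0) * v) ^ 2 ≤ A * S := by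
    calc ((ai * b0) * v) ^ 2 = (ai * b0) ^ 2 * v ^ 2 := by ring
      _ ≤ A * S := mul_le_mul hA hS2 (sq_nonneg _) hA0
  have t3 : ((xi * yj) * w) ^ 2 ≤ R ^ 4 * S := by
    calc ((xi * yj) * w) ^ 2 = w ^ 2 * (xi * yj) ^ 2 := by ring
      _ ≤ S * R ^ 4 := mul_le_mul hS3 hc3 (sq_nonneg _) hS0
      _ = R ^ 4 * S := by ring
  have e : a0 * b0 * (xi * yj - ai * bj)
      = u * (x0 * yj) + (ai * b0) * v - (xi * yj) * w := by
    rw [hu, hv, hw]; ring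
  have h3 : (u * (x0 * yj) + (ai * b0) * v - (xi * yj) * w) ^ 2
      ≤ 3 * ((u * (x0 * yj)) ^ 2 + ((ai * b0) * v) ^ 2 + ((xi * yj) * w) ^ 2) := by
    nlinarith [sq_nonneg (u * (x0 * yj) - (ai * b0) * v),
      sq_nonneg ((ai * b0) * v + (xi * yj) * w),
      sq_nonneg (u * (x0 * yj) + (xi * yj) * w)]
  have hR4 : 0 ≤ R ^ 4 := le_trans (sq_nonneg _) hc1
  calc (a0 * b0) ^ 2 * (xi * yj - ai * bj) ^ 2
      = (a0 * b0 * (xi * yj - ai * bj)) ^ 2 := by ring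
    _ = (u * (x0 * yj) + (ai * b0) * v - (xi * yj) * w) ^ 2 := by rw [e]
    _ ≤ 3 * ((u * (x0 * yj)) ^ 2 + ((ai * b0) * v) ^ 2 + ((xi * yj) * w) ^ 2) := h3
    _ ≤ 3 * (R ^ 4 * S + A * S + R ^ 4 * S) := by linarith
    _ ≤ 9 * (R ^ 4 + A) * S := by nlinarith

/-- rank-one matrix lemma: near the zero set, the full sum of
squares `Σ_{ij} f_{ij}²` with `f_{ij} = x_i y_j − a_i b_j` is equivalent to the
sum over the first row, first column, and corner. -/
theorem rank_one_equiv (M N : ℕ) [NeZero M] [NeZero N] (hM : 2 ≤ M) (hN : 2 ≤ N) (R : ℝ) (hR : 0 < R)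
    (a : Fin M → ℝ) (b : Fin N → ℝ) (ha : a 0 ≠ 0) (hb : b 0 ≠ 0) :
    ∃ ε c₁ c₂ : ℝ, 0 < ε ∧ 0 < c₁ ∧ 0 < c₂ ∧
      ∀ (x : Fin M → ℝ) (y : Fin N → ℝ),
        (∀ i, |x i| ≤ R) → (∀ j, |y j| ≤ R) →
        ((∑ i ∈ Finset.univ.erase 0, (x i * y 0 - a i * b 0) ^ 2)
          + (∑ j ∈ Finset.univ.erase 0, (x 0 * y j - a 0 * b j) ^ 2)
          + (x 0 * y 0 - a 0 * b 0) ^ 2) < ε →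
        c₁ * ((∑ i ∈ Finset.univ.erase 0, (x i * y 0 - a i * b 0) ^ 2)
              + (∑ j ∈ Finset.univ.erase 0, (x 0 * y j - a 0 * b j) ^ 2)
              + (x 0 * y 0 - a 0 * b 0) ^ 2)
            ≤ ∑ i, ∑ j, (x i * y j - a i * b j) ^ 2 ∧
        ∑ i, ∑ j, (x i * y j - a i * b j) ^ 2
            ≤ c₂ * ((∑ i ∈ Finset.univ.erase 0, (x i * y 0 - a i * b 0) ^ 2)
              + (∑ j ∈ Finset.univ.erase 0, (x 0 * y j - a 0 * b j) ^ 2)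
              + (x 0 * y 0 - a 0 * b 0) ^ 2) := by
  set A : ℝ := ∑ i, (a i * b 0) ^ 2 with hAdef
  have hAbd : ∀ i : Fin M, (a i * b 0) ^ 2 ≤ A := fun i =>
    Finset.single_le_sum (f := fun i : Fin M => (a i * b 0) ^ 2)
      (fun i _ => sq_nonneg _) (Finset.mem_univ i)
  have hApos : 0 < A := by
    have : 0 < (a 0 * b 0) ^ 2 := by positivity
    linarith [hAbd 0]
  have hD : (0 : ℝ) < (a 0 * b 0) ^ 2 := by positivity
  refine ⟨1, 1, (M * N) * (9 * (R ^ 4 + A)) / (a 0 * b 0) ^ 2, one_pos, one_pos, ?_, ?_⟩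
  · have hM0 : (0:ℝ) < M := by
      have : 0 < M := by omega
      exact_mod_cast this
    have hN0 : (0:ℝ) < N := by
      have : 0 < N := by omega
      exact_mod_cast this
    have : 0 < (M : ℝ) * N * (9 * (R ^ 4 + A)) := by positivity
    exact div_pos this hD
  intro x y hx hy _
  set S : ℝ := (∑ i ∈ Finset.univ.erase 0, (x i * y 0 - a i * b 0) ^ 2)
      + (∑ j ∈ Finset.univ.erase 0, (x 0 * y j - a 0 * b j) ^ 2)
      + (x 0 * y 0 - a 0 * b 0) ^ 2 with hSdef
  have hrow0 : 0 ≤ ∑ i ∈ Finset.univ.erase 0, (x i * y 0 - a i * b 0) ^ 2 :=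
    Finset.sum_nonneg fun _ _ => sq_nonneg _
  have hcol0 : 0 ≤ ∑ j ∈ Finset.univ.erase 0, (x 0 * y j - a 0 * b j) ^ 2 :=
    Finset.sum_nonneg fun _ _ => sq_nonneg _
  have hS0 : 0 ≤ S := by
    simp only [hSdef]; positivity
  have hrow : ∀ i : Fin M, (x i * y 0 - a i * b 0) ^ 2 ≤ S := by
    intro i
    rcases eq_or_ne i 0 with rfl | hi
    · simp only [hSdef]; linarith [sq_nonneg (x 0 * y 0 - a 0 * b 0)]
    · have : (x i * y 0 - a i * b 0) ^ 2
          ≤ ∑ i ∈ Finset.univ.erase 0, (x i * y 0 - a i * b 0) ^ 2 :=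
        Finset.single_le_sum (f := fun i : Fin M => (x i * y 0 - a i * b 0) ^ 2)
          (fun _ _ => sq_nonneg _) (Finset.mem_erase.2 ⟨hi, Finset.mem_univ i⟩)
      simp only [hSdef]; linarith [sq_nonneg (x 0 * y 0 - a 0 * b 0)]
  have hcol : ∀ j : Fin N, (x 0 * y j - a 0 * b j) ^ 2 ≤ S := by
    intro j
    rcases eq_or_ne j 0 with rfl | hj
    · simp only [hSdef]; linarith
    · have : (x 0 * y j - a 0 * b j) ^ 2
          ≤ ∑ j ∈ Finset.univ.erase 0, (x 0 * y j - a 0 * b j) ^ 2 :=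
        Finset.single_le_sum (f := fun j : Fin N => (x 0 * y j - a 0 * b j) ^ 2)
          (fun _ _ => sq_nonneg _) (Finset.mem_erase.2 ⟨hj, Finset.mem_univ j⟩)
      simp only [hSdef]; linarith [sq_nonneg (x 0 * y 0 - a 0 * b 0)]
  have hcorner : (x 0 * y 0 - a 0 * b 0) ^ 2 ≤ S := by
    simp only [hSdef]; linarith
  constructor
  · -- lower bound: S is a subsum of the full double sum
    rw [one_mul]
    have hsplit : ∀ i : Fin M, ∑ j, (x i * y j - a i * b j) ^ 2
        = (x i * y 0 - a i * b 0) ^ 2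
          + ∑ j ∈ Finset.univ.erase 0, (x i * y j - a i * b j) ^ 2 := by
      intro i
      exact (Finset.add_sum_erase Finset.univ
        (fun j : Fin N => (x i * y j - a i * b j) ^ 2) (Finset.mem_univ 0)).symm
    calc S = (x 0 * y 0 - a 0 * b 0) ^ 2
          + (∑ i ∈ Finset.univ.erase 0, (x i * y 0 - a i * b 0) ^ 2)
          + (∑ j ∈ Finset.univ.erase 0, (x 0 * y j - a 0 * b j) ^ 2) := by
            simp only [hSdef]; ring
      _ ≤ (∑ i, (x i * y 0 - a i * b 0) ^ 2)
          + ∑ i, ∑ j ∈ Finset.univ.erase 0, (x i * y j - a i * b j) ^ 2 := by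
            have h1 : (x 0 * y 0 - a 0 * b 0) ^ 2
                + ∑ i ∈ Finset.univ.erase 0, (x i * y 0 - a i * b 0) ^ 2
                = ∑ i, (x i * y 0 - a i * b 0) ^ 2 :=
              Finset.add_sum_erase Finset.univ
                (fun i : Fin M => (x i * y 0 - a i * b 0) ^ 2) (Finset.mem_univ 0)
            have h2 : ∑ j ∈ Finset.univ.erase 0, (x 0 * y j - a 0 * b j) ^ 2
                ≤ ∑ i, ∑ j ∈ Finset.univ.erase 0, (x i * y j - a i * b j) ^ 2 :=
              Finset.single_le_sum
                (f := fun i : Fin M => ∑ j ∈ Finset.univ.erase 0, (x i * y j - a i * b j) ^ 2)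
                (fun i _ => Finset.sum_nonneg fun _ _ => sq_nonneg _)
                (Finset.mem_univ 0)
            linarith
      _ = ∑ i, ∑ j, (x i * y j - a i * b j) ^ 2 := by
            rw [← Finset.sum_add_distrib]
            exact Finset.sum_congr rfl fun i _ => (hsplit i).symm
  · -- upper bound via the pointwise key lemma
    have hterm : ∀ (i : Fin M) (j : Fin N),
        (x i * y j - a i * b j) ^ 2 ≤ 9 * (R ^ 4 + A) * S / (a 0 * b 0) ^ 2 := by
      intro i j
      rw [le_div_iff₀ hD]
      have := rank_one_key (a 0) (b 0) (a i) (b j) (x 0) (y 0) (x i) (y j) R S A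
        (hx 0) (hx i) (hy 0) (hy j) (hAbd i) (hrow i) (hcol j) hcorner hS0
      linarith
    calc ∑ i, ∑ j, (x i * y j - a i * b j) ^ 2
        ≤ ∑ _i : Fin M, ∑ _j : Fin N, 9 * (R ^ 4 + A) * S / (a 0 * b 0) ^ 2 :=
          Finset.sum_le_sum fun i _ => Finset.sum_le_sum fun j _ => hterm i j
      _ = (M : ℝ) * ((N : ℝ) * (9 * (R ^ 4 + A) * S / (a 0 * b 0) ^ 2)) := by
          simp [Finset.sum_const, Finset.card_univ, mul_assoc]
      _ = (M * N) * (9 * (R ^ 4 + A)) / (a 0 * b 0) ^ 2 * S := by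
          field_simp
end

section
/- Let x_i (1 ≤ i ≤ I), y_j (1 ≤ j ≤ J), z_k (1 ≤ k ≤ K) be bounded real variables, a_i, b_j, c_k real constants with a₁b₁c₁ ≠ 0, and f_{ijk} = x_i y_j z_k − a_i b_j c_k. Then, for I, J, K ≥ 2, the sum Σ_{i,j,k} f_{ijk}² is equivalent up to positive constant factors (in a neighborhood of the zero set) to Σ_{i=2}^I f_{i11}² + Σ_{j=2}^J f_{1j1}² + Σ_{k=2}^K f_{11k}² + f_{111}². -/
lemma abs_mul3_le {x y z X Y Z : ℝ} (hx : |x| ≤ X) (hy : |y| ≤ Y) (hz : |z| ≤ Z) :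
    |x * y * z| ≤ X * Y * Z := by
  have hX : 0 ≤ X := (abs_nonneg _).trans hx
  have hY : 0 ≤ Y := (abs_nonneg _).trans hy
  calc |x * y * z| = |x| * |y| * |z| := by rw [abs_mul, abs_mul]
    _ ≤ X * Y * Z :=
      mul_le_mul (mul_le_mul hx hy (abs_nonneg _) hX) hz (abs_nonneg _) (mul_nonneg hX hY)

lemma four_sq (a b c d : ℝ) : (a + b + c + d)^2 ≤ 4 * (a^2 + b^2 + c^2 + d^2) := by
  nlinarith [sq_nonneg (a - b), sq_nonneg (a - c), sq_nonneg (a - d),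
    sq_nonneg (b - c), sq_nonneg (b - d), sq_nonneg (c - d)]

lemma rank_one_key_s6 (B m u v w p u' v' w' p' f : ℝ) (hB1 : 1 ≤ B)
    (hv : |v| ≤ B) (hw : |w| ≤ B) (hp : |p| ≤ B)
    (hu' : |u'| ≤ B) (hv' : |v'| ≤ B) (hw' : |w'| ≤ B) (hp' : |p'| ≤ B)
    (hm : 0 < m) (hmp : m ≤ |p|) (hmp' : m ≤ |p'|)
    (hid : f * (p^2 * p'^2) = u*v*w*p'^2 - u'*v'*w'*p^2) :
    f^2 ≤ 16*B^8/m^8 * ((u-u')^2+(v-v')^2+(w-w')^2+(p-p')^2) := by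
  have sq_le : ∀ t : ℝ, |t| ≤ B → t^2 ≤ B^2 := fun t ht => by
    have := pow_le_pow_left₀ (abs_nonneg t) ht 2
    rwa [sq_abs] at this
  have hv2 := sq_le v hv
  have hw2 := sq_le w hw
  have hp2 := sq_le p hp
  have hu'2 := sq_le u' hu'
  have hv'2 := sq_le v' hv'
  have hw'2 := sq_le w' hw'
  have hp'2 := sq_le p' hp'
  have hB0 : (0:ℝ) < B := lt_of_lt_of_le one_pos hB1
  have h1 : ((u - u') * (v * w * p'^2))^2 ≤ B^8 * (u - u')^2 := by
    have hc : v^2 * w^2 * (p'^2)^2 ≤ B^2 * B^2 * (B^2)^2 := by gcongr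
    calc ((u - u') * (v * w * p'^2))^2 = (u - u')^2 * (v^2 * w^2 * (p'^2)^2) := by ring
      _ ≤ (u - u')^2 * (B^2 * B^2 * (B^2)^2) := mul_le_mul_of_nonneg_left hc (sq_nonneg _)
      _ = B^8 * (u - u')^2 := by ring
  have h2 : ((v - v') * (u' * w * p'^2))^2 ≤ B^8 * (v - v')^2 := by
    have hc : u'^2 * w^2 * (p'^2)^2 ≤ B^2 * B^2 * (B^2)^2 := by gcongr
    calc ((v - v') * (u' * w * p'^2))^2 = (v - v')^2 * (u'^2 * w^2 * (p'^2)^2) := by ring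
      _ ≤ (v - v')^2 * (B^2 * B^2 * (B^2)^2) := mul_le_mul_of_nonneg_left hc (sq_nonneg _)
      _ = B^8 * (v - v')^2 := by ring
  have h3 : ((w - w') * (u' * v' * p'^2))^2 ≤ B^8 * (w - w')^2 := by
    have hc : u'^2 * v'^2 * (p'^2)^2 ≤ B^2 * B^2 * (B^2)^2 := by gcongr
    calc ((w - w') * (u' * v' * p'^2))^2 = (w - w')^2 * (u'^2 * v'^2 * (p'^2)^2) := by ring
      _ ≤ (w - w')^2 * (B^2 * B^2 * (B^2)^2) := mul_le_mul_of_nonneg_left hc (sq_nonneg _)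
      _ = B^8 * (w - w')^2 := by ring
  have hpp : (p + p')^2 ≤ 4 * B^2 := by nlinarith [sq_nonneg (p - p')]
  have h4 : ((p - p') * (-(u' * v' * w' * (p + p'))))^2 ≤ 4 * B^8 * (p - p')^2 := by
    have hc : u'^2 * v'^2 * w'^2 * (p + p')^2 ≤ B^2 * B^2 * B^2 * (4 * B^2) := by gcongr
    calc ((p - p') * (-(u' * v' * w' * (p + p'))))^2
        = (p - p')^2 * (u'^2 * v'^2 * w'^2 * (p + p')^2) := by ring
      _ ≤ (p - p')^2 * (B^2 * B^2 * B^2 * (4 * B^2)) := mul_le_mul_of_nonneg_left hc (sq_nonneg _)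
      _ = 4 * B^8 * (p - p')^2 := by ring
  have hN2 : (f * (p^2 * p'^2))^2 ≤ 4 * (((u - u') * (v * w * p'^2))^2
      + ((v - v') * (u' * w * p'^2))^2 + ((w - w') * (u' * v' * p'^2))^2
      + ((p - p') * (-(u' * v' * w' * (p + p'))))^2) := by
    have hNe : f * (p^2 * p'^2) = (u - u') * (v * w * p'^2) + (v - v') * (u' * w * p'^2)
        + (w - w') * (u' * v' * p'^2) + (p - p') * (-(u' * v' * w' * (p + p'))) := by
      rw [hid]; ring
    rw [hNe]
    exact four_sq _ _ _ _
  have hBnn : (0:ℝ) ≤ B^8 := by positivity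
  have hX1 : 0 ≤ B^8 * (u - u')^2 := mul_nonneg hBnn (sq_nonneg _)
  have hX2 : 0 ≤ B^8 * (v - v')^2 := mul_nonneg hBnn (sq_nonneg _)
  have hX3 : 0 ≤ B^8 * (w - w')^2 := mul_nonneg hBnn (sq_nonneg _)
  have hX4 : 0 ≤ B^8 * (p - p')^2 := mul_nonneg hBnn (sq_nonneg _)
  have hdist : 16 * B^8 * ((u-u')^2+(v-v')^2+(w-w')^2+(p-p')^2)
      = 16 * (B^8 * (u - u')^2) + 16 * (B^8 * (v - v')^2)
        + 16 * (B^8 * (w - w')^2) + 16 * (B^8 * (p - p')^2) := by ring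
  have hN3 : (f * (p^2 * p'^2))^2 ≤ 16 * B^8 * ((u-u')^2+(v-v')^2+(w-w')^2+(p-p')^2) := by
    rw [hdist]; linarith
  have hm2p : m^2 ≤ p^2 := by
    have := pow_le_pow_left₀ hm.le hmp 2
    rwa [sq_abs] at this
  have hm2p' : m^2 ≤ p'^2 := by
    have := pow_le_pow_left₀ hm.le hmp' 2
    rwa [sq_abs] at this
  have hmono : m^8 ≤ (p^2 * p'^2)^2 := by
    have h : m^2 * m^2 ≤ p^2 * p'^2 := mul_le_mul hm2p hm2p' (by positivity) (sq_nonneg _)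
    calc m^8 = (m^2 * m^2)^2 := by ring
      _ ≤ (p^2 * p'^2)^2 := by gcongr
  have hfm : f^2 * m^8 ≤ 16 * B^8 * ((u-u')^2+(v-v')^2+(w-w')^2+(p-p')^2) := by
    calc f^2 * m^8 ≤ f^2 * (p^2 * p'^2)^2 := mul_le_mul_of_nonneg_left hmono (sq_nonneg _)
      _ = (f * (p^2 * p'^2))^2 := by ring
      _ ≤ _ := hN3
  rw [div_mul_eq_mul_div, le_div_iff₀ (by positivity : (0:ℝ) < m^8)]
  linarith

/-- Corollary 1: near the zero set, `Σ_{ijk} f_{ijk}²` with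
`f_{ijk} = x_i y_j z_k − a_i b_j c_k` is equivalent, up to positive constants,
to `Σ_{i≥2} f_{i11}² + Σ_{j≥2} f_{1j1}² + Σ_{k≥2} f_{11k}² + f_{111}²`. -/
theorem rank_one_tensor_equiv (I J K : ℕ) [NeZero I] [NeZero J] [NeZero K]
    (hI : 2 ≤ I) (hJ : 2 ≤ J) (hK : 2 ≤ K) (R : ℝ) (hR : 0 < R)
    (a : Fin I → ℝ) (b : Fin J → ℝ) (c : Fin K → ℝ) (habc : a 0 * b 0 * c 0 ≠ 0) :
    ∃ ε c₁ c₂ : ℝ, 0 < ε ∧ 0 < c₁ ∧ 0 < c₂ ∧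
      ∀ (x : Fin I → ℝ) (y : Fin J → ℝ) (z : Fin K → ℝ),
        (∀ i, |x i| ≤ R) → (∀ j, |y j| ≤ R) → (∀ k, |z k| ≤ R) →
        ((∑ i ∈ Finset.univ.erase 0, (x i * y 0 * z 0 - a i * b 0 * c 0) ^ 2)
          + (∑ j ∈ Finset.univ.erase 0, (x 0 * y j * z 0 - a 0 * b j * c 0) ^ 2)
          + (∑ k ∈ Finset.univ.erase 0, (x 0 * y 0 * z k - a 0 * b 0 * c k) ^ 2)
          + (x 0 * y 0 * z 0 - a 0 * b 0 * c 0) ^ 2) < ε →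
        c₁ * ((∑ i ∈ Finset.univ.erase 0, (x i * y 0 * z 0 - a i * b 0 * c 0) ^ 2)
              + (∑ j ∈ Finset.univ.erase 0, (x 0 * y j * z 0 - a 0 * b j * c 0) ^ 2)
              + (∑ k ∈ Finset.univ.erase 0, (x 0 * y 0 * z k - a 0 * b 0 * c k) ^ 2)
              + (x 0 * y 0 * z 0 - a 0 * b 0 * c 0) ^ 2)
            ≤ ∑ i, ∑ j, ∑ k, (x i * y j * z k - a i * b j * c k) ^ 2 ∧
        ∑ i, ∑ j, ∑ k, (x i * y j * z k - a i * b j * c k) ^ 2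
            ≤ c₂ * ((∑ i ∈ Finset.univ.erase 0, (x i * y 0 * z 0 - a i * b 0 * c 0) ^ 2)
              + (∑ j ∈ Finset.univ.erase 0, (x 0 * y j * z 0 - a 0 * b j * c 0) ^ 2)
              + (∑ k ∈ Finset.univ.erase 0, (x 0 * y 0 * z k - a 0 * b 0 * c k) ^ 2)
              + (x 0 * y 0 * z 0 - a 0 * b 0 * c 0) ^ 2) := by
  classical
  set CA := ∑ i, |a i| with hCAdef
  set CB := ∑ j, |b j| with hCBdef
  set CC := ∑ k, |c k| with hCCdef
  have hCAb : ∀ i, |a i| ≤ CA := fun i =>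
    Finset.single_le_sum (f := fun i => |a i|) (fun _ _ => abs_nonneg _) (Finset.mem_univ i)
  have hCBb : ∀ j, |b j| ≤ CB := fun j =>
    Finset.single_le_sum (f := fun j => |b j|) (fun _ _ => abs_nonneg _) (Finset.mem_univ j)
  have hCCb : ∀ k, |c k| ≤ CC := fun k =>
    Finset.single_le_sum (f := fun k => |c k|) (fun _ _ => abs_nonneg _) (Finset.mem_univ k)
  have hCA0 : 0 ≤ CA := (abs_nonneg _).trans (hCAb 0)
  have hCB0 : 0 ≤ CB := (abs_nonneg _).trans (hCBb 0)
  have hCC0 : 0 ≤ CC := (abs_nonneg _).trans (hCCb 0)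
  set B := 1 + R * R * R + CA * CB * CC with hBdef
  have hPnn : 0 ≤ CA * CB * CC := mul_nonneg (mul_nonneg hCA0 hCB0) hCC0
  have hB1 : 1 ≤ B := by nlinarith
  have hRB : R * R * R ≤ B := by nlinarith
  have hCvB : CA * CB * CC ≤ B := by nlinarith
  have habB : ∀ (i : Fin I) (j : Fin J) (k : Fin K), |a i * b j * c k| ≤ B :=
    fun i j k => (abs_mul3_le (hCAb i) (hCBb j) (hCCb k)).trans hCvB
  set m := |a 0 * b 0 * c 0| / 2 with hmdef
  clear_value CA CB CC B m
  have habs0 : 0 < |a 0 * b 0 * c 0| := abs_pos.mpr habc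
  have hm : 0 < m := by rw [hmdef]; linarith
  have hmp' : m ≤ |a 0 * b 0 * c 0| := by rw [hmdef]; linarith
  have hI0 : (0:ℝ) < (I:ℝ) := by exact_mod_cast lt_of_lt_of_le Nat.zero_lt_two hI
  have hJ0 : (0:ℝ) < (J:ℝ) := by exact_mod_cast lt_of_lt_of_le Nat.zero_lt_two hJ
  have hK0 : (0:ℝ) < (K:ℝ) := by exact_mod_cast lt_of_lt_of_le Nat.zero_lt_two hK
  have hB0 : (0:ℝ) < B := lt_of_lt_of_le one_pos hB1
  refine ⟨m^2, 1, (I:ℝ) * J * K * (64 * B^8 / m^8), pow_pos hm 2, one_pos,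
    by positivity, ?_⟩
  intro x y z hx hy hz hS
  set S1 := ∑ i ∈ Finset.univ.erase 0, (x i * y 0 * z 0 - a i * b 0 * c 0) ^ 2 with hS1def
  set S2 := ∑ j ∈ Finset.univ.erase 0, (x 0 * y j * z 0 - a 0 * b j * c 0) ^ 2 with hS2def
  set S3 := ∑ k ∈ Finset.univ.erase 0, (x 0 * y 0 * z k - a 0 * b 0 * c k) ^ 2 with hS3def
  clear_value S1 S2 S3
  have hS1n : 0 ≤ S1 := by rw [hS1def]; exact Finset.sum_nonneg fun _ _ => sq_nonneg _
  have hS2n : 0 ≤ S2 := by rw [hS2def]; exact Finset.sum_nonneg fun _ _ => sq_nonneg _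
  have hS3n : 0 ≤ S3 := by rw [hS3def]; exact Finset.sum_nonneg fun _ _ => sq_nonneg _
  -- per-index bounds by S
  have hdS : ∀ i : Fin I, (x i * y 0 * z 0 - a i * b 0 * c 0) ^ 2
      ≤ S1 + S2 + S3 + (x 0 * y 0 * z 0 - a 0 * b 0 * c 0) ^ 2 := by
    intro i
    by_cases hi : i = 0
    · subst hi; linarith
    · have h : (x i * y 0 * z 0 - a i * b 0 * c 0) ^ 2 ≤ S1 := by
        rw [hS1def]
        exact Finset.single_le_sum (f := fun i => (x i * y 0 * z 0 - a i * b 0 * c 0) ^ 2)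
          (fun _ _ => sq_nonneg _) (Finset.mem_erase.mpr ⟨hi, Finset.mem_univ _⟩)
      linarith [sq_nonneg (x 0 * y 0 * z 0 - a 0 * b 0 * c 0)]
  have heS : ∀ j : Fin J, (x 0 * y j * z 0 - a 0 * b j * c 0) ^ 2
      ≤ S1 + S2 + S3 + (x 0 * y 0 * z 0 - a 0 * b 0 * c 0) ^ 2 := by
    intro j
    by_cases hj : j = 0
    · subst hj; linarith
    · have h : (x 0 * y j * z 0 - a 0 * b j * c 0) ^ 2 ≤ S2 := by
        rw [hS2def]
        exact Finset.single_le_sum (f := fun j => (x 0 * y j * z 0 - a 0 * b j * c 0) ^ 2)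
          (fun _ _ => sq_nonneg _) (Finset.mem_erase.mpr ⟨hj, Finset.mem_univ _⟩)
      linarith [sq_nonneg (x 0 * y 0 * z 0 - a 0 * b 0 * c 0)]
  have hgS : ∀ k : Fin K, (x 0 * y 0 * z k - a 0 * b 0 * c k) ^ 2
      ≤ S1 + S2 + S3 + (x 0 * y 0 * z 0 - a 0 * b 0 * c 0) ^ 2 := by
    intro k
    by_cases hk : k = 0
    · subst hk; linarith
    · have h : (x 0 * y 0 * z k - a 0 * b 0 * c k) ^ 2 ≤ S3 := by
        rw [hS3def]
        exact Finset.single_le_sum (f := fun k => (x 0 * y 0 * z k - a 0 * b 0 * c k) ^ 2)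
          (fun _ _ => sq_nonneg _) (Finset.mem_erase.mpr ⟨hk, Finset.mem_univ _⟩)
      linarith [sq_nonneg (x 0 * y 0 * z 0 - a 0 * b 0 * c 0)]
  -- |x0 y0 z0| ≥ m
  have hf0lt : (x 0 * y 0 * z 0 - a 0 * b 0 * c 0) ^ 2 < m ^ 2 := by linarith
  have habslt : |x 0 * y 0 * z 0 - a 0 * b 0 * c 0| < m := by
    nlinarith [abs_nonneg (x 0 * y 0 * z 0 - a 0 * b 0 * c 0),
      sq_abs (x 0 * y 0 * z 0 - a 0 * b 0 * c 0)]
  have hpm : m ≤ |x 0 * y 0 * z 0| := by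
    have h := abs_sub_abs_le_abs_sub (a 0 * b 0 * c 0) (x 0 * y 0 * z 0)
    rw [abs_sub_comm] at h
    have h2m : |a 0 * b 0 * c 0| = 2 * m := by rw [hmdef]; ring
    linarith
  have hxB : ∀ (i : Fin I) (j : Fin J) (k : Fin K), |x i * y j * z k| ≤ B :=
    fun i j k => (abs_mul3_le (hx i) (hy j) (hz k)).trans hRB
  -- lower bound with c₁ = 1
  constructor
  · have step : ∀ i : Fin I, (x i * y 0 * z 0 - a i * b 0 * c 0) ^ 2
        ≤ ∑ j, ∑ k, (x i * y j * z k - a i * b j * c k) ^ 2 := fun i =>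
      le_trans
        (Finset.single_le_sum (f := fun k => (x i * y 0 * z k - a i * b 0 * c k) ^ 2)
          (fun _ _ => sq_nonneg _) (Finset.mem_univ 0))
        (Finset.single_le_sum (f := fun j => ∑ k, (x i * y j * z k - a i * b j * c k) ^ 2)
          (fun _ _ => Finset.sum_nonneg fun _ _ => sq_nonneg _) (Finset.mem_univ 0))
    have b1 : S1 ≤ ∑ i ∈ Finset.univ.erase 0, ∑ j, ∑ k,
        (x i * y j * z k - a i * b j * c k) ^ 2 := by
      rw [hS1def]; exact Finset.sum_le_sum fun i _ => step i
    have b2 : S2 ≤ ∑ j ∈ Finset.univ.erase 0, ∑ k,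
        (x 0 * y j * z k - a 0 * b j * c k) ^ 2 := by
      rw [hS2def]
      exact Finset.sum_le_sum fun j _ =>
        Finset.single_le_sum (f := fun k => (x 0 * y j * z k - a 0 * b j * c k) ^ 2)
          (fun _ _ => sq_nonneg _) (Finset.mem_univ 0)
    have e1 : (∑ j, ∑ k, (x 0 * y j * z k - a 0 * b j * c k) ^ 2)
        + ∑ i ∈ Finset.univ.erase 0, ∑ j, ∑ k, (x i * y j * z k - a i * b j * c k) ^ 2
        = ∑ i, ∑ j, ∑ k, (x i * y j * z k - a i * b j * c k) ^ 2 :=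
      Finset.add_sum_erase _ (fun i => ∑ j, ∑ k, (x i * y j * z k - a i * b j * c k) ^ 2)
        (Finset.mem_univ 0)
    have e2 : (∑ k, (x 0 * y 0 * z k - a 0 * b 0 * c k) ^ 2)
        + ∑ j ∈ Finset.univ.erase 0, ∑ k, (x 0 * y j * z k - a 0 * b j * c k) ^ 2
        = ∑ j, ∑ k, (x 0 * y j * z k - a 0 * b j * c k) ^ 2 :=
      Finset.add_sum_erase _ (fun j => ∑ k, (x 0 * y j * z k - a 0 * b j * c k) ^ 2)
        (Finset.mem_univ 0)
    have e3 : (x 0 * y 0 * z 0 - a 0 * b 0 * c 0) ^ 2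
        + ∑ k ∈ Finset.univ.erase 0, (x 0 * y 0 * z k - a 0 * b 0 * c k) ^ 2
        = ∑ k, (x 0 * y 0 * z k - a 0 * b 0 * c k) ^ 2 :=
      Finset.add_sum_erase _ (fun k => (x 0 * y 0 * z k - a 0 * b 0 * c k) ^ 2)
        (Finset.mem_univ 0)
    rw [one_mul]
    rw [← hS3def] at e3
    linarith
  -- upper bound
  · have hterm : ∀ (i : Fin I) (j : Fin J) (k : Fin K),
        (x i * y j * z k - a i * b j * c k) ^ 2
          ≤ 64 * B^8 / m^8 * (S1 + S2 + S3 + (x 0 * y 0 * z 0 - a 0 * b 0 * c 0) ^ 2) := by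
      intro i j k
      have hk := rank_one_key_s6 B m (x i * y 0 * z 0) (x 0 * y j * z 0) (x 0 * y 0 * z k)
        (x 0 * y 0 * z 0) (a i * b 0 * c 0) (a 0 * b j * c 0) (a 0 * b 0 * c k)
        (a 0 * b 0 * c 0) (x i * y j * z k - a i * b j * c k) hB1
        (hxB 0 j 0) (hxB 0 0 k) (hxB 0 0 0) (habB i 0 0) (habB 0 j 0) (habB 0 0 k)
        (habB 0 0 0) hm hpm hmp' (by ring)
      have h4S : (x i * y 0 * z 0 - a i * b 0 * c 0) ^ 2 + (x 0 * y j * z 0 - a 0 * b j * c 0) ^ 2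
          + (x 0 * y 0 * z k - a 0 * b 0 * c k) ^ 2 + (x 0 * y 0 * z 0 - a 0 * b 0 * c 0) ^ 2
          ≤ 4 * (S1 + S2 + S3 + (x 0 * y 0 * z 0 - a 0 * b 0 * c 0) ^ 2) := by
        linarith [hdS i, heS j, hgS k]
      calc (x i * y j * z k - a i * b j * c k) ^ 2
          ≤ 16 * B^8 / m^8 * ((x i * y 0 * z 0 - a i * b 0 * c 0) ^ 2
            + (x 0 * y j * z 0 - a 0 * b j * c 0) ^ 2
            + (x 0 * y 0 * z k - a 0 * b 0 * c k) ^ 2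
            + (x 0 * y 0 * z 0 - a 0 * b 0 * c 0) ^ 2) := hk
        _ ≤ 16 * B^8 / m^8 * (4 * (S1 + S2 + S3 + (x 0 * y 0 * z 0 - a 0 * b 0 * c 0) ^ 2)) :=
            mul_le_mul_of_nonneg_left h4S (by positivity)
        _ = 64 * B^8 / m^8 * (S1 + S2 + S3 + (x 0 * y 0 * z 0 - a 0 * b 0 * c 0) ^ 2) := by
            ring
    calc ∑ i, ∑ j, ∑ k, (x i * y j * z k - a i * b j * c k) ^ 2
        ≤ ∑ _i : Fin I, ∑ _j : Fin J, ∑ _k : Fin K,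
            (64 * B^8 / m^8 * (S1 + S2 + S3 + (x 0 * y 0 * z 0 - a 0 * b 0 * c 0) ^ 2)) :=
          Finset.sum_le_sum fun i _ => Finset.sum_le_sum fun j _ =>
            Finset.sum_le_sum fun k _ => hterm i j k
      _ = (I:ℝ) * J * K * (64 * B^8 / m^8)
            * (S1 + S2 + S3 + (x 0 * y 0 * z 0 - a 0 * b 0 * c 0) ^ 2) := by
          simp only [Finset.sum_const, Finset.card_univ, Fintype.card_fin, nsmul_eq_mul]
          ring
end
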